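/- arXiv:1612.06571 — 2 statements merged into one kernel-verified Lean document; each statement's English description precedes it below -/
import Mathlib

section
/- Let Q be a real v×s matrix, let w be a design on v treatments, set V = Qᵀ diag(w)⁻¹ Q and λ = λ_max(V), and let h ∈ ℝ^s with ‖h‖ = 1 and V h = λ h. If hᵀ Qᵀ diag(w)⁻¹ diag(w̃) diag(w)⁻¹ Q h ≤ λ for every w̃ ∈ ℝ^v with w̃_i ≥ 0 and Σ_i w̃_i = 1, then λ_max(Qᵀ diag(w̃)⁻¹ Q) ≥ λ for every design w̃ on v treatments; that is, w is E-optimal. -/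
/-!
Write `a = Q h`. Since `h` is a unit eigenvector, `λ = Σ a_i² / w_i`, and the hypothesis at `w̃`
reads `Σ w̃_i a_i² / w_i² ≤ λ`. Termwise, `a²/w̃ + w̃ a²/w² - 2a²/w = a² (w - w̃)² / (w̃ w²) ≥ 0`;
summing gives `2λ ≤ hᵀ V_w̃ h + λ`, so `λ ≤ hᵀ V_w̃ h`, and the Rayleigh quotient of the
symmetric matrix `V_w̃` is bounded by its largest eigenvalue.
-/

open Matrix

lemma inv_diagonal_of_ne_zero {n K : Type*} [Fintype n] [DecidableEq n] [Field K] {d : n → K}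
    (hd : ∀ i, d i ≠ 0) : (diagonal d)⁻¹ = diagonal fun i => (d i)⁻¹ :=
  inv_eq_right_inv <| by
    rw [diagonal_mul_diagonal, ← diagonal_one]
    exact congrArg diagonal (funext fun i => mul_inv_cancel₀ (hd i))

lemma dotProduct_transpose_mul_diagonal_mul_mulVec {m n R : Type*} [Fintype m] [Fintype n]
    [DecidableEq m] [CommRing R] (Q : Matrix m n R) (d : m → R) (x : n → R) :
    x ⬝ᵥ ((Qᵀ * diagonal d * Q) *ᵥ x) = ∑ i, d i * (Q *ᵥ x) i ^ 2 := by
  rw [← mulVec_mulVec, ← mulVec_mulVec, dotProduct_mulVec, vecMul_transpose]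
  simp only [dotProduct, mulVec_diagonal]
  exact Finset.sum_congr rfl fun i _ => by ring

open scoped MatrixOrder in
lemma Matrix.IsHermitian.dotProduct_mulVec_le {n : Type*} [Fintype n] [DecidableEq n]
    {A : Matrix n n ℝ} (hA : A.IsHermitian) {c : ℝ}
    (hc : c ∈ upperBounds {r | ∃ x : n → ℝ, x ≠ 0 ∧ A *ᵥ x = r • x}) (x : n → ℝ) :
    x ⬝ᵥ (A *ᵥ x) ≤ c * (x ⬝ᵥ x) := by
  have hAc : A ≤ algebraMap ℝ _ c := by
    refine le_algebraMap_of_spectrum_le fun μ hμ => hc ?_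
    rw [← spectrum_toLin', ← Module.End.hasEigenvalue_iff_mem_spectrum] at hμ
    obtain ⟨y, hy⟩ := hμ.exists_hasEigenvector
    exact ⟨y, hy.2, by simpa using hy.apply_eq_smul⟩
  have := (Matrix.le_iff.mp hAc).dotProduct_mulVec_nonneg x
  rw [Algebra.algebraMap_eq_smul_one, star_trivial, sub_mulVec, smul_mulVec, one_mulVec,
    dotProduct_sub, dotProduct_smul, smul_eq_mul] at this
  linarith

lemma two_mul_inv_mul_sq_le {p q : ℝ} (hp : 0 < p) (hq : 0 < q) (a : ℝ) :
    2 * (p⁻¹ * a ^ 2) ≤ q⁻¹ * a ^ 2 + p⁻¹ * q * p⁻¹ * a ^ 2 := by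
  have hgap : q⁻¹ * a ^ 2 + p⁻¹ * q * p⁻¹ * a ^ 2 - 2 * (p⁻¹ * a ^ 2)
      = (p - q) ^ 2 * a ^ 2 / (q * p ^ 2) := by
    field_simp
    ring
  have : 0 ≤ (p - q) ^ 2 * a ^ 2 / (q * p ^ 2) := by positivity
  linarith

lemma sum_inv_mul_sq_le {ι : Type*} {s : Finset ι} {w wt a : ι → ℝ} (hw : ∀ i, 0 < w i)
    (hwt : ∀ i, 0 < wt i)
    (hcrit : ∑ i ∈ s, (w i)⁻¹ * wt i * (w i)⁻¹ * a i ^ 2 ≤ ∑ i ∈ s, (w i)⁻¹ * a i ^ 2) :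
    ∑ i ∈ s, (w i)⁻¹ * a i ^ 2 ≤ ∑ i ∈ s, (wt i)⁻¹ * a i ^ 2 := by
  have := Finset.sum_le_sum fun i (_ : i ∈ s) => two_mul_inv_mul_sq_le (hw i) (hwt i) (a i)
  rw [← Finset.mul_sum, Finset.sum_add_distrib] at this
  linarith

theorem stmt_10_general (v s : ℕ) (Q : Matrix (Fin v) (Fin s) ℝ)
    (w : Fin v → ℝ) (hw : ∀ i, 0 < w i)
    (lam : ℝ) (h : Fin s → ℝ) (hnorm : ∑ j, (h j) ^ 2 = 1)
    (heig : (Qᵀ * (Matrix.diagonal w)⁻¹ * Q) *ᵥ h = lam • h)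
    (hineq : ∀ wt : Fin v → ℝ, (∀ i, 0 ≤ wt i) → ∑ i, wt i = 1 →
        h ⬝ᵥ ((Qᵀ * (Matrix.diagonal w)⁻¹ * Matrix.diagonal wt *
          (Matrix.diagonal w)⁻¹ * Q) *ᵥ h) ≤ lam) :
    ∀ wt : Fin v → ℝ, (∀ i, 0 < wt i) → ∑ i, wt i = 1 →
      ∀ lam' : ℝ, IsGreatest {r : ℝ | ∃ x : Fin s → ℝ, x ≠ 0 ∧
          (Qᵀ * (Matrix.diagonal wt)⁻¹ * Q) *ᵥ x = r • x} lam' →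
        lam ≤ lam' := by
  intro wt hwt hwt1 lam' hlam'
  have hh : h ⬝ᵥ h = 1 := by simpa [dotProduct, sq] using hnorm
  have hdw := inv_diagonal_of_ne_zero fun i => (hw i).ne'
  have hlam : lam = ∑ i, (w i)⁻¹ * (Q *ᵥ h) i ^ 2 := by
    rw [← dotProduct_transpose_mul_diagonal_mul_mulVec, ← hdw, heig, dotProduct_smul, hh,
      smul_eq_mul, mul_one]
  have hcrit : ∑ i, (w i)⁻¹ * wt i * (w i)⁻¹ * (Q *ᵥ h) i ^ 2 ≤ lam := by
    have := hineq wt (fun i => (hwt i).le) hwt1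
    rwa [hdw, Matrix.mul_assoc Qᵀ, Matrix.mul_assoc Qᵀ, diagonal_mul_diagonal,
      diagonal_mul_diagonal, dotProduct_transpose_mul_diagonal_mul_mulVec] at this
  have hherm : (Qᵀ * (diagonal wt)⁻¹ * Q).IsHermitian := by
    simpa using isHermitian_conjTranspose_mul_mul Q (isHermitian_diagonal wt).inv
  have hrayleigh := hherm.dotProduct_mulVec_le hlam'.2 h
  rw [hh, mul_one, inv_diagonal_of_ne_zero fun i => (hwt i).ne',
    dotProduct_transpose_mul_diagonal_mul_mulVec] at hrayleigh
  rw [hlam] at hcrit ⊢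
  exact (sum_inv_mul_sq_le hw hwt hcrit).trans hrayleigh

/-- Equivalence theorem for E-optimality, reformulated: Let `w` be a
design, `V = Qᵀ diag(w)⁻¹ Q`, `λ = λ_max(V)`, and `h` a unit eigenvector of `V` for `λ`.
If `hᵀ Qᵀ diag(w)⁻¹ diag(w̃) diag(w)⁻¹ Q h ≤ λ` for every nonnegative `w̃` summing to 1,
then `λ_max(Qᵀ diag(w̃)⁻¹ Q) ≥ λ` for every design `w̃`, i.e., `w` is E-optimal. -/
theorem stmt_10 (v s : ℕ) (Q : Matrix (Fin v) (Fin s) ℝ)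
    (w : Fin v → ℝ) (hw : ∀ i, 0 < w i) (hw1 : ∑ i, w i = 1)
    (lam : ℝ) (h : Fin s → ℝ) (hnorm : ∑ j, (h j) ^ 2 = 1)
    (heig : (Qᵀ * (Matrix.diagonal w)⁻¹ * Q) *ᵥ h = lam • h)
    (hlam : IsGreatest {r : ℝ | ∃ x : Fin s → ℝ, x ≠ 0 ∧
        (Qᵀ * (Matrix.diagonal w)⁻¹ * Q) *ᵥ x = r • x} lam)
    (hineq : ∀ wt : Fin v → ℝ, (∀ i, 0 ≤ wt i) → ∑ i, wt i = 1 →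
        h ⬝ᵥ ((Qᵀ * (Matrix.diagonal w)⁻¹ * Matrix.diagonal wt *
          (Matrix.diagonal w)⁻¹ * Q) *ᵥ h) ≤ lam) :
    ∀ wt : Fin v → ℝ, (∀ i, 0 < wt i) → ∑ i, wt i = 1 →
      ∀ lam' : ℝ, IsGreatest {r : ℝ | ∃ x : Fin s → ℝ, x ≠ 0 ∧
          (Qᵀ * (Matrix.diagonal wt)⁻¹ * Q) *ᵥ x = r • x} lam' →
        lam ≤ lam' :=
  stmt_10_general v s Q w hw lam h hnorm heig hineq
end

section
/- Let 1 ≤ g < v and let Q = (−I_g ⊗ 1_{v−g}, 1_g ⊗ I_{v−g})ᵀ be the v×(g(v−g)) coefficient matrix of the comparisons τ_j − τ_i for i ∈ {1,…,g} (controls), j ∈ {g+1,…,v}. Then Q Qᵀ is the block matrix [[(v−g) I_g, −J_{g×(v−g)}],[−J_{(v−g)×g}, g I_{v−g}]], and the permutation π of {1,…,v} consisting of the two cycles (1,2,…,g) and (g+1,g+2,…,v) has permutation matrix P satisfying P Q Qᵀ Pᵀ = Q Qᵀ. Consequently, for every design criterion Φ for Q and every design w on v treatments, there exist γ ∈ (0,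 1/g) and a design w′ with w′_i = γ for i ∈ {1,…,g} and w′_j = (1 − gγ)/(v−g) for j ∈ {g+1,…,v} such that Φ(w′) ≥ Φ(w). -/
/-!
The group `ℤ/g × ℤ/h`, rotating the controls and the treatments cyclically, acts on the
treatments by `ρ` and on the comparisons by `σ` with `Q (ρ x) (σ p) = Q x p`. Hence
`V_Q(w ∘ ρ)` is `V_Q(w)` with rows and columns permuted by `σ`, so every design criterion takes
the same value at all rotations of `w`, and `P Q Qᵀ Pᵀ = Q Qᵀ` for the same reason. By Jensen's
inequality `Φ w` is at most `Φ` of the average of these rotations, and that average is constant on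
the controls and on the treatments: it is the design with `γ = (w_1 + ⋯ + w_g) / g`.
-/

open Matrix

/-- A design on a finite set of treatments: strictly positive weights summing to one. -/
def IsDesign {ι : Type*} [Fintype ι] (w : ι → ℝ) : Prop :=
  (∀ i, 0 < w i) ∧ ∑ i, w i = 1

namespace Matrix

variable {ι κ R : Type*} [CommRing R]

theorem mul_transpose_submatrix_eq_of_submatrix_eq [Fintype κ] {Q : Matrix ι κ R} {ρ : ι ≃ ι}
    {σ : κ ≃ κ} (hQ : Q.submatrix ρ σ = Q) : (Q * Qᵀ).submatrix ρ ρ = Q * Qᵀ := by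
  conv_rhs => rw [← hQ]
  rw [transpose_submatrix, submatrix_mul_equiv]

theorem charpoly_transpose_mul_inv_diagonal_comp_mul [Fintype ι] [Fintype κ] [DecidableEq ι]
    [DecidableEq κ] {Q : Matrix ι κ R} {ρ : ι ≃ ι} {σ : κ ≃ κ}
    (hQ : Q.submatrix ρ σ = Q) (w : ι → R) :
    (Qᵀ * (diagonal (w ∘ ρ))⁻¹ * Q).charpoly = (Qᵀ * (diagonal w)⁻¹ * Q).charpoly := by
  have hV : Qᵀ * (diagonal (w ∘ ρ))⁻¹ * Q = (Qᵀ * (diagonal w)⁻¹ * Q).submatrix σ σ := by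
    conv_lhs => rw [← hQ]
    rw [← submatrix_diagonal_equiv, inv_submatrix_equiv, transpose_submatrix,
      submatrix_mul_equiv, submatrix_mul_equiv]
  rw [hV, ← charpoly_reindex σ.symm (Qᵀ * (diagonal w)⁻¹ * Q), reindex_apply, Equiv.symm_symm]

theorem permMatrix_mul_mul_transpose [Fintype ι] [DecidableEq ι] (π : Equiv.Perm ι)
    (M : Matrix ι ι R) :
    π.symm.toPEquiv.toMatrix * M * π.symm.toPEquiv.toMatrixᵀ = M.submatrix π.symm π.symm := by
  rw [← PEquiv.toMatrix_symm, ← Equiv.toPEquiv_symm, PEquiv.toMatrix_toPEquiv_mul,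
    PEquiv.mul_toMatrix_toPEquiv, Equiv.symm_symm, submatrix_submatrix]
  rfl

end Matrix

theorem ConcaveOn.le_map_average_of_map_eq {E : Type*} [AddCommGroup E] [Module ℝ E] {s : Set E}
    {f : E → ℝ} (hf : ConcaveOn ℝ s f) {α : Type*} [Fintype α] [Nonempty α] {p : α → E}
    (hp : ∀ a, p a ∈ s) {c : ℝ} (hfp : ∀ a, f (p a) = c) :
    (Fintype.card α : ℝ)⁻¹ • ∑ a, p a ∈ s ∧ c ≤ f ((Fintype.card α : ℝ)⁻¹ • ∑ a, p a) := by
  have hpos : ∀ a ∈ (Finset.univ : Finset α), (0 : ℝ) ≤ (Fintype.card α : ℝ)⁻¹ :=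
    fun _ _ => by positivity
  have hone : ∑ _a : α, (Fintype.card α : ℝ)⁻¹ = 1 := by
    simp [Finset.card_univ, Fintype.card_ne_zero]
  rw [Finset.smul_sum]
  refine ⟨hf.1.sum_mem hpos hone fun a _ => hp a, ?_⟩
  calc c = ∑ a, (Fintype.card α : ℝ)⁻¹ • f (p a) := by
        simp only [hfp, ← Finset.sum_smul, hone, one_smul]
    _ ≤ f (∑ a, (Fintype.card α : ℝ)⁻¹ • p a) := hf.le_map_sum hpos hone fun a _ => hp a

theorem concaveOn_of_forall_one_sub_le {E : Type*} [AddCommGroup E] [Module ℝ E] {s : Set E}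
    (hs : Convex ℝ s) {f : E → ℝ}
    (hf : ∀ x ∈ s, ∀ y ∈ s, ∀ t : ℝ, 0 ≤ t → t ≤ 1 →
      t * f x + (1 - t) * f y ≤ f (t • x + (1 - t) • y)) :
    ConcaveOn ℝ s f := by
  refine ⟨hs, fun x hx y hy a b ha hb hab => ?_⟩
  obtain rfl : b = 1 - a := by linarith
  exact hf x hx y hy a ha (by linarith)

section Design

variable {ι : Type*} [Fintype ι]

theorem IsDesign.comp_equiv {w : ι → ℝ} (hw : IsDesign w) (e : ι ≃ ι) : IsDesign (w ∘ e) :=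
  ⟨fun i => hw.1 (e i), (e.sum_comp w).trans hw.2⟩

theorem convex_setOf_isDesign : Convex ℝ {w : ι → ℝ | IsDesign w} := by
  intro x hx y hy a b ha hb hab
  refine ⟨fun i => ?_, ?_⟩
  · rcases ha.eq_or_lt with rfl | ha
    · simpa [show b = 1 by linarith] using hy.1 i
    · exact add_pos_of_pos_of_nonneg (mul_pos ha (hx.1 i)) (mul_nonneg hb (hy.1 i).le)
  · simp only [Pi.add_apply, Pi.smul_apply, smul_eq_mul, Finset.sum_add_distrib,
      ← Finset.mul_sum, hx.2, hy.2, mul_one, hab]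

end Design

section Rotation

variable {A B : Type*} [AddGroup A] [AddGroup B]

def sumAddRight (ab : A × B) : Equiv.Perm (A ⊕ B) :=
  Equiv.sumCongr (Equiv.addRight ab.1) (Equiv.addRight ab.2)

theorem sumAddRight_symm (ab : A × B) : (sumAddRight ab).symm = sumAddRight (-ab) := by
  ext (a | b) <;> simp [sumAddRight]

variable [Fintype A] [Fintype B]

theorem sum_sumAddRight_apply {M : Type*} [AddCommMonoid M] (w : A ⊕ B → M) (x : A ⊕ B) :
    ∑ ab : A × B, w (sumAddRight ab x) =
      Sum.elim (fun _ => Fintype.card B • ∑ a, w (.inl a))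
        (fun _ => Fintype.card A • ∑ b, w (.inr b)) x := by
  rcases x with a | b
  · simp only [sumAddRight, Fintype.sum_prod_type, Equiv.sumCongr_apply, Sum.map_inl,
      Equiv.coe_addRight, Finset.sum_const, Finset.card_univ, Sum.elim_inl, ← Finset.smul_sum]
    exact congrArg _ (Equiv.sum_comp (Equiv.addLeft a) fun a => w (.inl a))
  · simp only [sumAddRight, Fintype.sum_prod_type, Equiv.sumCongr_apply, Sum.map_inr,
      Equiv.coe_addRight, Finset.sum_const, Finset.card_univ, Sum.elim_inr]
    exact congrArg _ (Equiv.sum_comp (Equiv.addLeft b) fun b => w (.inr b))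

theorem IsDesign.average_sumAddRight {w : A ⊕ B → ℝ} (hw : IsDesign w) :
    (Fintype.card (A × B) : ℝ)⁻¹ • ∑ ab : A × B, w ∘ sumAddRight ab =
      Sum.elim (fun _ => (∑ a, w (.inl a)) / Fintype.card A)
        (fun _ => (1 - Fintype.card A * ((∑ a, w (.inl a)) / Fintype.card A)) /
          Fintype.card B) := by
  have hsplit : ∑ a, w (.inl a) + ∑ b, w (.inr b) = 1 := by
    rw [← Fintype.sum_sum_type]; exact hw.2
  have hA : (Fintype.card A : ℝ) ≠ 0 := Nat.cast_ne_zero.mpr Fintype.card_ne_zero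
  have hB : (Fintype.card B : ℝ) ≠ 0 := Nat.cast_ne_zero.mpr Fintype.card_ne_zero
  ext x
  simp only [Pi.smul_apply, Finset.sum_apply, Function.comp_apply, sum_sumAddRight_apply,
    Fintype.card_prod, smul_eq_mul]
  rcases x with a | b
  · simp only [Sum.elim_inl, nsmul_eq_mul, Nat.cast_mul]
    field_simp
  · simp only [Sum.elim_inr, nsmul_eq_mul, Nat.cast_mul]
    field_simp
    linarith

end Rotation

section ControlComparison

variable (A B : Type*) [DecidableEq A] [DecidableEq B]

def controlComparisonMatrix : Matrix (A ⊕ B) (A × B) ℝ :=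
  of fun x p => Sum.elim (fun i => if i = p.1 then (-1 : ℝ) else 0)
    (fun j => if j = p.2 then (1 : ℝ) else 0) x

theorem controlComparisonMatrix_mul_transpose [Fintype A] [Fintype B] :
    controlComparisonMatrix A B * (controlComparisonMatrix A B)ᵀ =
      fromBlocks ((Fintype.card B : ℝ) • 1) (-of fun _ _ => 1)
        (-of fun _ _ => 1) ((Fintype.card A : ℝ) • 1) := by
  ext (i | j) (i' | j') <;>
    simp [controlComparisonMatrix, mul_apply, Fintype.sum_prod_type, one_apply, mul_ite, eq_comm]
  all_goals split_ifs <;> simp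

theorem controlComparisonMatrix_submatrix_sumAddRight [AddGroup A] [AddGroup B] (ab : A × B) :
    (controlComparisonMatrix A B).submatrix (sumAddRight ab) (Equiv.addRight ab) =
      controlComparisonMatrix A B := by
  ext (i | j) ⟨i', j'⟩ <;> simp [controlComparisonMatrix, sumAddRight]

end ControlComparison

/-- Comparing `v - g` treatments with `g` controls, `1 ≤ g < v`. Writing
`h = v - g ≥ 1`, the treatments are indexed by `Fin g ⊕ Fin h` (controls first) and the
comparisons `τ_j - τ_i` by `Fin g × Fin h`, with coefficient matrix
`Q = (-I_g ⊗ 1_h, 1_g ⊗ I_h)ᵀ`. Then `Q Qᵀ = [[(v-g) I_g, -J], [-J, g I_{v-g}]]`, the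
permutation `π` consisting of the two cycles `(1,…,g)` and `(g+1,…,v)` has permutation
matrix `P` with `P Q Qᵀ Pᵀ = Q Qᵀ`, and consequently for every design criterion `Φ` for
`Q` (concave on designs, depending on a design only through the characteristic
polynomial of `V_Q(w) = Qᵀ diag(w)⁻¹ Q`) and every design `w`, there exist
`γ ∈ (0, 1/g)` and a design `w'` with `w'_i = γ` on the controls and
`w'_j = (1 - gγ)/(v - g)` on the remaining treatments, such that `Φ(w') ≥ Φ(w)`. -/
theorem stmt_18 (g h : ℕ) [NeZero g] [NeZero h] :
    let Q : Matrix (Fin g ⊕ Fin h) (Fin g × Fin h) ℝ :=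
      Matrix.of fun x p =>
        Sum.elim (fun i => if i = p.1 then (-1 : ℝ) else 0)
          (fun j => if j = p.2 then (1 : ℝ) else 0) x
    let π : Equiv.Perm (Fin g ⊕ Fin h) :=
      Equiv.sumCongr (Equiv.addRight (1 : Fin g)) (Equiv.addRight (1 : Fin h))
    let P : Matrix (Fin g ⊕ Fin h) (Fin g ⊕ Fin h) ℝ :=
      Matrix.of fun i j => if π j = i then (1 : ℝ) else 0
    Q * Qᵀ = Matrix.fromBlocks
        ((h : ℝ) • (1 : Matrix (Fin g) (Fin g) ℝ)) (-(Matrix.of fun _ _ => (1 : ℝ)))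
        (-(Matrix.of fun _ _ => (1 : ℝ))) ((g : ℝ) • (1 : Matrix (Fin h) (Fin h) ℝ)) ∧
    P * (Q * Qᵀ) * Pᵀ = Q * Qᵀ ∧
    ∀ Φ : ((Fin g ⊕ Fin h) → ℝ) → ℝ,
      (∀ w w' : (Fin g ⊕ Fin h) → ℝ, IsDesign w → IsDesign w' →
          ∀ t : ℝ, 0 ≤ t → t ≤ 1 →
            t * Φ w + (1 - t) * Φ w' ≤ Φ (t • w + (1 - t) • w')) →
      (∀ w w' : (Fin g ⊕ Fin h) → ℝ, IsDesign w → IsDesign w' →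
          (Qᵀ * (Matrix.diagonal w)⁻¹ * Q).charpoly
            = (Qᵀ * (Matrix.diagonal w')⁻¹ * Q).charpoly → Φ w = Φ w') →
      ∀ w : (Fin g ⊕ Fin h) → ℝ, IsDesign w →
        ∃ γ : ℝ, 0 < γ ∧ γ < 1 / (g : ℝ) ∧
          IsDesign (Sum.elim (fun _ : Fin g => γ)
            (fun _ : Fin h => (1 - (g : ℝ) * γ) / (h : ℝ))) ∧
          Φ w ≤ Φ (Sum.elim (fun _ : Fin g => γ)
            (fun _ : Fin h => (1 - (g : ℝ) * γ) / (h : ℝ))) := by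
  intro Q π P
  have hQ : Q = controlComparisonMatrix (Fin g) (Fin h) := rfl
  have hQ_inv (ab : Fin g × Fin h) : Q.submatrix (sumAddRight ab) (Equiv.addRight ab) = Q := by
    rw [hQ, controlComparisonMatrix_submatrix_sumAddRight]
  refine ⟨?_, ?_, ?_⟩
  · simpa only [hQ, Fintype.card_fin] using controlComparisonMatrix_mul_transpose (Fin g) (Fin h)
  · have hP : P = π.symm.toPEquiv.toMatrix := by
      ext i j
      simp [P, PEquiv.toMatrix_apply, Equiv.eq_symm_apply, eq_comm]
    have hπ : π.symm = sumAddRight (-(1, 1)) := sumAddRight_symm (1, 1)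
    rw [hP, permMatrix_mul_mul_transpose, hπ]
    exact mul_transpose_submatrix_eq_of_submatrix_eq (hQ_inv _)
  · intro Φ hconc hinv w hw
    have hΦ : ConcaveOn ℝ {u | IsDesign u} Φ :=
      concaveOn_of_forall_one_sub_le convex_setOf_isDesign fun x hx y hy => hconc x y hx hy
    obtain ⟨hdesign, hle⟩ := hΦ.le_map_average_of_map_eq (p := fun ab => w ∘ sumAddRight ab)
      (fun ab => hw.comp_equiv _) fun ab =>
        hinv _ _ (hw.comp_equiv _) hw (charpoly_transpose_mul_inv_diagonal_comp_mul (hQ_inv ab) w)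
    simp only [hw.average_sumAddRight, Fintype.card_fin] at hdesign hle
    set γ := (∑ i, w (.inl i)) / (g : ℝ)
    have hγ : 0 < γ := hdesign.1 (.inl 0)
    have hγg : γ < 1 / g := by
      have hrest : 0 < (1 - g * γ) / h := hdesign.1 (.inr 0)
      rw [div_pos_iff_of_pos_right (Nat.cast_pos.mpr (NeZero.pos h))] at hrest
      rw [lt_div_iff₀ (Nat.cast_pos.mpr (NeZero.pos g))]
      linarith
    exact ⟨γ, hγ, hγg, hdesign, hle⟩
end
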